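/- arXiv:1008.4560 — 6 statements merged into one kernel-verified Lean document; each statement's English description precedes it below -/
import Mathlib

section
/- Let B : ℂ^{d−1} → ℂ^N be a vector-valued multi-affine polynomial, written B(w) = ∑_{α ⊆ {1,…,d−1}} B_α·w^α with coefficient vectors B_α ∈ ℂ^N, and suppose that |B(w)|² is a symmetric function of w (invariant under all permutations of the d−1 variables). Then the inner product ⟨B_α, B_β⟩ depends only on |α|, |β|, and |α ∩ β|: if α, β, α', β' ⊆ {1,…,d−1} satisfy |α| = |α'|, |β| = |β'|, and |α ∩ β| = |α' ∩ β'|, then ⟨B_α, B_β⟩ = ⟨B_{α'}, B_{β'}⟩. -/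
/-!
Expanding, `|B(w)|² = ∑_{α,β} ⟨B_α, B_β⟩ w^α conj(w)^β`. A polynomial in `w` and `conj w` that
is affine in each `w_k` and in each `conj w_k` and vanishes identically has zero coefficients
(peel off one variable at a time, testing `w_k ∈ {0, 1, -1, i}`), so the Gram coefficients are
determined by the function `|B|²`. Symmetry of `|B|²` thus gives `⟨B_{σα}, B_{σβ}⟩ = ⟨B_α, B_β⟩`
for every permutation `σ`. Finally `|α|`, `|β|`, `|α ∩ β|` fix the sizes of the four Venn regions
of `(α, β)`, hence determine the pair up to a permutation.
-/

open Complex ComplexConjugate Finset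

noncomputable section

theorem eq_zero_of_forall_sesquiaffine_eq_zero {A B C D : ℂ}
    (h : ∀ z : ℂ, A + z * B + conj z * C + z * conj z * D = 0) :
    A = 0 ∧ B = 0 ∧ C = 0 ∧ D = 0 := by
  have h₀ := h 0
  have h₁ := h 1
  have h₂ := h (-1)
  have h₃ := h I
  simp only [map_zero, map_one, map_neg, conj_I] at h₀ h₁ h₂ h₃
  refine ⟨by linear_combination h₀, ?_, ?_, by linear_combination (h₁ + h₂) / 2 - h₀⟩
  · linear_combination (h₁ - h₂) / 4 - I / 2 * (h₃ - (h₁ + h₂) / 2) +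
      ((B - C) / 2 - D * I / 2) * I_sq
  · linear_combination (h₁ - h₂) / 4 + I / 2 * (h₃ - (h₁ + h₂) / 2) -
      ((B - C) / 2 - D * I / 2) * I_sq

theorem Finset.exists_subset_eq_or_eq_insert {ι : Type*} [DecidableEq ι] {k : ι}
    {s a : Finset ι} (ha : a ⊆ insert k s) : ∃ a₀ ⊆ s, a = a₀ ∨ a = insert k a₀ := by
  by_cases hk : k ∈ a
  · exact ⟨a.erase k, subset_insert_iff.mp ha, .inr (insert_erase hk).symm⟩
  · exact ⟨a, (subset_insert_iff_of_notMem hk).mp ha, .inl rfl⟩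

section
variable {ι : Type*}

def sesqMultiaffine (s : Finset ι) (c : Finset ι → Finset ι → ℂ) (w : ι → ℂ) : ℂ :=
  ∑ a ∈ s.powerset, ∑ b ∈ s.powerset, c a b * (∏ i ∈ a, w i) * ∏ j ∈ b, conj (w j)

theorem sesqMultiaffine_update_of_notMem [DecidableEq ι] {s : Finset ι} {k : ι} (hk : k ∉ s)
    (c : Finset ι → Finset ι → ℂ) (w : ι → ℂ) (z : ℂ) :
    sesqMultiaffine s c (Function.update w k z) = sesqMultiaffine s c w := by
  have hw : ∀ i ∈ s, Function.update w k z i = w i := fun i hi =>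
    Function.update_of_ne (ne_of_mem_of_not_mem hi hk) _ _
  unfold sesqMultiaffine
  refine sum_congr rfl fun a ha => sum_congr rfl fun b hb => ?_
  rw [prod_congr rfl fun i hi => hw i (mem_powerset.mp ha hi),
    prod_congr rfl fun j hj => congrArg conj (hw j (mem_powerset.mp hb hj))]

theorem sesqMultiaffine_insert [DecidableEq ι] {s : Finset ι} {k : ι} (hk : k ∉ s)
    (c : Finset ι → Finset ι → ℂ) (w : ι → ℂ) :
    sesqMultiaffine (insert k s) c w =
      sesqMultiaffine s c w + w k * sesqMultiaffine s (fun a b => c (insert k a) b) w +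
        conj (w k) * sesqMultiaffine s (fun a b => c a (insert k b)) w +
        w k * conj (w k) * sesqMultiaffine s (fun a b => c (insert k a) (insert k b)) w := by
  have hprod : ∀ a ∈ s.powerset, ∀ f : ι → ℂ, ∏ i ∈ insert k a, f i = f k * ∏ i ∈ a, f i :=
    fun a ha f => prod_insert fun hka => hk (mem_powerset.mp ha hka)
  simp only [sesqMultiaffine, sum_powerset_insert hk, mul_sum, ← sum_add_distrib]
  refine sum_congr rfl fun a ha => sum_congr rfl fun b hb => ?_
  rw [hprod a ha, hprod b hb]
  ring

theorem eq_zero_of_forall_sesqMultiaffine_eq_zero (s : Finset ι) :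
    ∀ c : Finset ι → Finset ι → ℂ, (∀ w, sesqMultiaffine s c w = 0) →
      ∀ a ⊆ s, ∀ b ⊆ s, c a b = 0 := by
  classical
  induction s using Finset.induction_on with
  | empty =>
    intro c h a ha b hb
    simpa [subset_empty.mp ha, subset_empty.mp hb, sesqMultiaffine] using h 0
  | insert k s hk ih =>
    intro c h
    have hcoeff (w : ι → ℂ) := eq_zero_of_forall_sesquiaffine_eq_zero fun z => by
      simpa [sesqMultiaffine_insert hk, sesqMultiaffine_update_of_notMem hk] using
        h (Function.update w k z)
    intro a ha b hb
    obtain ⟨a₀, ha₀, rfl | rfl⟩ := exists_subset_eq_or_eq_insert ha <;>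
    obtain ⟨b₀, hb₀, rfl | rfl⟩ := exists_subset_eq_or_eq_insert hb
    · exact ih _ (fun w => (hcoeff w).1) _ ha₀ _ hb₀
    · exact ih _ (fun w => (hcoeff w).2.2.1) _ ha₀ _ hb₀
    · exact ih _ (fun w => (hcoeff w).2.1) _ ha₀ _ hb₀
    · exact ih _ (fun w => (hcoeff w).2.2.2) _ ha₀ _ hb₀

end

theorem exists_perm_image_eq_image_eq {ι : Type*} [Fintype ι] [DecidableEq ι]
    {α β α' β' : Finset ι} (hα : #α = #α') (hβ : #β = #β') (hαβ : #(α ∩ β) = #(α' ∩ β')) :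
    ∃ σ : Equiv.Perm ι, α.image σ = α' ∧ β.image σ = β' := by
  have card_both (γ δ : Finset ι) : #{x | x ∈ γ ∧ x ∈ δ} = #(γ ∩ δ) := by
    congr 1; ext; simp
  have card_left (γ δ : Finset ι) : #{x | x ∈ γ ∧ x ∉ δ} = #γ - #(γ ∩ δ) := by
    rw [← card_sdiff_of_subset inter_subset_left]; congr 1; ext; simp
  have card_right (γ δ : Finset ι) : #{x | x ∉ γ ∧ x ∈ δ} = #δ - #(γ ∩ δ) := by
    rw [← card_sdiff_of_subset inter_subset_right]; congr 1; ext; simp [and_comm]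
  have card_neither (γ δ : Finset ι) :
      #{x | x ∉ γ ∧ x ∉ δ} = Fintype.card ι - (#γ + #δ - #(γ ∩ δ)) := by
    rw [← card_union, ← card_compl]; congr 1; ext; simp
  let venn (γ δ : Finset ι) (x : ι) : Bool × Bool := (decide (x ∈ γ), decide (x ∈ δ))
  have hfiber (c) :
      Fintype.card {x // venn α β x = c} = Fintype.card {x // venn α' β' x = c} := by
    rcases c with ⟨_ | _, _ | _⟩ <;>
      simp only [venn, Fintype.card_subtype, Prod.ext_iff, decide_eq_true_eq,
        decide_eq_false_iff_not, card_both, card_left, card_right, card_neither, hα, hβ, hαβ]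
  obtain ⟨σ, hσ⟩ : ∃ σ : Equiv.Perm ι, ∀ x, venn α' β' (σ x) = venn α β x :=
    ⟨.ofFiberEquiv fun c => Fintype.equivOfCardEq (hfiber c), Equiv.ofFiberEquiv_map _⟩
  simp only [venn, Prod.ext_iff, decide_eq_decide] at hσ
  refine ⟨σ, ?_, ?_⟩ <;> ext y <;> obtain ⟨x, rfl⟩ := σ.surjective y <;>
    simp only [σ.injective.mem_finset_image, hσ]

section
variable {ι E : Type*} [Fintype ι] [NormedAddCommGroup E] [InnerProductSpace ℂ E]

theorem inner_self_sum_prod_smul (B : Finset ι → E) (w : ι → ℂ) :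
    inner ℂ (∑ a, (∏ i ∈ a, w i) • B a) (∑ a, (∏ i ∈ a, w i) • B a) =
      sesqMultiaffine univ (fun a b => inner ℂ (B b) (B a)) w := by
  simp only [sesqMultiaffine, powerset_univ, sum_inner, inner_sum, inner_smul_left,
    inner_smul_right, map_prod, mul_sum]
  exact sum_congr rfl fun a _ => sum_congr rfl fun b _ => by ring

theorem inner_eq_inner_of_forall_norm_sum_prod_smul_eq {B B' : Finset ι → E}
    (h : ∀ w : ι → ℂ, ‖∑ a, (∏ i ∈ a, w i) • B a‖ = ‖∑ a, (∏ i ∈ a, w i) • B' a‖)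
    (a b : Finset ι) : inner ℂ (B b) (B a) = inner ℂ (B' b) (B' a) := by
  have hzero (w : ι → ℂ) :
      sesqMultiaffine univ (fun a b => inner ℂ (B b) (B a) - inner ℂ (B' b) (B' a)) w = 0 := by
    have hinner : inner ℂ (∑ a, (∏ i ∈ a, w i) • B a) (∑ a, (∏ i ∈ a, w i) • B a) =
        inner ℂ (∑ a, (∏ i ∈ a, w i) • B' a) (∑ a, (∏ i ∈ a, w i) • B' a) := by
      rw [inner_self_eq_norm_sq_to_K, inner_self_eq_norm_sq_to_K, h w]
    rw [inner_self_sum_prod_smul, inner_self_sum_prod_smul] at hinner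
    simpa only [sesqMultiaffine, sub_mul, sum_sub_distrib, sub_eq_zero] using hinner
  exact sub_eq_zero.mp <|
    eq_zero_of_forall_sesqMultiaffine_eq_zero univ _ hzero a (subset_univ a) b (subset_univ b)

theorem sum_prod_comp_perm_smul [DecidableEq ι] (σ : Equiv.Perm ι) (B : Finset ι → E)
    (w : ι → ℂ) :
    ∑ a, (∏ i ∈ a, w (σ i)) • B a = ∑ a, (∏ i ∈ a, w i) • B (a.image σ.symm) := by
  refine Fintype.sum_equiv (Equiv.finsetCongr σ) _ _ fun a => ?_
  simp [map_eq_image, image_image, prod_image σ.injective.injOn]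

end

/-- if `B(w) = ∑_{α ⊆ [m]} B_α w^α` is a vector-valued multi-affine
polynomial such that `|B(w)|²` is a symmetric function of `w`, then the inner product
`⟨B_α, B_β⟩` depends only on `|α|`, `|β|` and `|α ∩ β|`. -/
theorem stmt6 (m N : ℕ) (Bc : Finset (Fin m) → EuclideanSpace ℂ (Fin N))
    (hsym : ∀ σ : Equiv.Perm (Fin m), ∀ w : Fin m → ℂ,
      ‖∑ α : Finset (Fin m), (∏ i ∈ α, w (σ i)) • Bc α‖ =
        ‖∑ α : Finset (Fin m), (∏ i ∈ α, w i) • Bc α‖) :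
    ∀ α β α' β' : Finset (Fin m),
      α.card = α'.card → β.card = β'.card → (α ∩ β).card = (α' ∩ β').card →
        (inner ℂ (Bc β) (Bc α) : ℂ) = inner ℂ (Bc β') (Bc α') := by
  intro α β α' β' hα hβ hαβ
  obtain ⟨σ, rfl, rfl⟩ := exists_perm_image_eq_image_eq hα hβ hαβ
  refine inner_eq_inner_of_forall_norm_sum_prod_smul_eq (B' := fun a => Bc (a.image σ))
    (fun w => ?_) α β
  simpa only [sum_prod_comp_perm_smul, Equiv.symm_symm] using (hsym σ.symm w).symm
end
end

section
/- Let B : ℂ^{d−1} → ℂ^N be a vector-valued multi-affine polynomial, B(w) = ∑_{α ⊆ {1,…,d−1}} B_α·w^α, such that |B(w)|² depends only on |α|, |β|, |α∩β| in the sense that ⟨B_α,B_β⟩ = B^{|α∩β|}_{|α|,|β|} for some numbers B^i_{j,k}, and suppose |B|² is 𝕋^{d−1}-symmetric: |B(w)|² = |w_1⋯w_{d−1}|²·|B(1/conj(w_1),…,1/conj(w_{d−1}))|² for all w with nonzero coordinates. Then B^i_{j,k} = B^{d−1−j−k+i}_{d−1−k, d−1−j} for all α, β ⊆ {1,…,d−1}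 with |α| = j, |β| = k, |α∩β| = i. -/
open Complex ComplexConjugate Finset

noncomputable section

/-!
Both sides of the `𝕋^m`-symmetry identity are polynomials in `w` and `w̄` of the form
`∑ f α β w^α w̄^β`: on the left with coefficients `⟨B_α, B_β⟩`, on the right, once
`|w₁ ⋯ w_m|²` is multiplied in, with coefficients `⟨B_{βᶜ}, B_{αᶜ}⟩`. Such a polynomial
vanishing on `(ℂˣ)^m` has zero coefficients: induct on the variables, using that
`a + b t̄ + c t + d |t|²` vanishes at `t = 1, -1, 2, i` only if `a = b = c = d = 0`.
Comparing coefficients and counting `|αᶜ ∩ βᶜ| = m - |α ∪ β|` gives the claim.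
-/

lemma eq_zero_of_forall_add_conj_mul_add_mul_add_mul_conj_eq_zero {a b c d : ℂ}
    (h : ∀ t : ℂ, t ≠ 0 → a + conj t * b + t * c + t * conj t * d = 0) :
    a = 0 ∧ b = 0 ∧ c = 0 ∧ d = 0 := by
  have h₁ := h 1 one_ne_zero
  have h₂ := h (-1) (by norm_num)
  have h₃ := h 2 two_ne_zero
  have hI := h I I_ne_zero
  simp only [map_one, map_neg, map_ofNat, conj_I, mul_neg, I_mul_I, neg_neg] at h₁ h₂ h₃ hI
  refine ⟨?_, ?_, ?_, ?_⟩
  · linear_combination h₁ + h₂ / 3 - h₃ / 3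
  · linear_combination (h₁ - h₂) / 4 + I * (hI - h₁ / 2 - h₂ / 2) / 2 + (b - c) / 2 * I_sq
  · linear_combination (h₁ - h₂) / 4 - I * (hI - h₁ / 2 - h₂ / 2) / 2 - (b - c) / 2 * I_sq
  · linear_combination -h₁ / 2 + h₂ / 6 + h₃ / 3

lemma Finset.forall_subset_insert {ι : Type*} [DecidableEq ι] {s : Finset ι} {a : ι}
    {P : Finset ι → Prop} (h : ∀ α ⊆ s, P α ∧ P (insert a α)) : ∀ α ⊆ insert a s, P α := by
  intro α hα
  by_cases haα : a ∈ α
  · rw [← insert_erase haα]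
    exact (h _ (subset_insert_iff.mp hα)).2
  · exact (h α ((subset_insert_iff_of_notMem haα).mp hα)).1

section SesqPoly

variable {ι : Type*}

def sesqPoly (s : Finset ι) (f : Finset ι → Finset ι → ℂ) (w : ι → ℂ) : ℂ :=
  ∑ α ∈ s.powerset, ∑ β ∈ s.powerset, f α β * (∏ i ∈ α, w i) * ∏ i ∈ β, conj (w i)

@[simp]
lemma sesqPoly_empty (f : Finset ι → Finset ι → ℂ) (w : ι → ℂ) : sesqPoly ∅ f w = f ∅ ∅ := by
  simp [sesqPoly]

lemma sesqPoly_sub (s : Finset ι) (f g : Finset ι → Finset ι → ℂ) (w : ι → ℂ) :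
    sesqPoly s (f - g) w = sesqPoly s f w - sesqPoly s g w := by
  simp only [sesqPoly, Pi.sub_apply, sub_mul, sum_sub_distrib]

lemma sesqPoly_insert [DecidableEq ι] {s : Finset ι} {a : ι} (ha : a ∉ s)
    (f : Finset ι → Finset ι → ℂ) (w : ι → ℂ) :
    sesqPoly (insert a s) f w =
      sesqPoly s f w + conj (w a) * sesqPoly s (fun α β ↦ f α (insert a β)) w
        + w a * sesqPoly s (fun α β ↦ f (insert a α) β) w
        + w a * conj (w a) * sesqPoly s (fun α β ↦ f (insert a α) (insert a β)) w := by
  have notMem {γ} (hγ : γ ∈ s.powerset) : a ∉ γ := fun h ↦ ha (mem_powerset.mp hγ h)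
  simp only [sesqPoly, sum_powerset_insert ha, mul_sum, ← sum_add_distrib]
  refine sum_congr rfl fun α hα ↦ sum_congr rfl fun β hβ ↦ ?_
  rw [prod_insert (notMem hα), prod_insert (notMem hβ)]
  ring

lemma sesqPoly_update_of_notMem [DecidableEq ι] {s : Finset ι} {a : ι} (ha : a ∉ s)
    (f : Finset ι → Finset ι → ℂ) (w : ι → ℂ) (t : ℂ) :
    sesqPoly s f (Function.update w a t) = sesqPoly s f w := by
  have hw : ∀ i ∈ s, Function.update w a t i = w i :=
    fun i hi ↦ Function.update_of_ne (ne_of_mem_of_not_mem hi ha) _ _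
  refine sum_congr rfl fun α hα ↦ sum_congr rfl fun β hβ ↦ ?_
  rw [prod_congr rfl fun i hi ↦ hw i (mem_powerset.mp hα hi),
    prod_congr rfl fun i hi ↦ congrArg conj (hw i (mem_powerset.mp hβ hi))]

theorem eq_zero_of_sesqPoly_eq_zero [DecidableEq ι] (s : Finset ι) (f : Finset ι → Finset ι → ℂ)
    (h : ∀ w : ι → ℂ, (∀ i ∈ s, w i ≠ 0) → sesqPoly s f w = 0) :
    ∀ α ⊆ s, ∀ β ⊆ s, f α β = 0 := by
  induction s using Finset.induction_on generalizing f with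
  | empty =>
    intro α hα β hβ
    rw [subset_empty.mp hα, subset_empty.mp hβ, ← sesqPoly_empty f 1]
    exact h 1 (by simp)
  | @insert a s ha ih =>
    have parts (w : ι → ℂ) (hw : ∀ i ∈ s, w i ≠ 0) :=
      eq_zero_of_forall_add_conj_mul_add_mul_add_mul_conj_eq_zero fun t ht ↦ by
        have hw' : ∀ i ∈ insert a s, Function.update w a t i ≠ 0 := by
          simp only [forall_mem_insert, Function.update_self]
          refine ⟨ht, fun i hi ↦ ?_⟩
          rw [Function.update_of_ne (ne_of_mem_of_not_mem hi ha)]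
          exact hw i hi
        simpa only [sesqPoly_insert ha, sesqPoly_update_of_notMem ha, Function.update_self]
          using h _ hw'
    refine forall_subset_insert fun α hα ↦ ⟨?_, ?_⟩ <;>
      refine forall_subset_insert fun β hβ ↦ ⟨?_, ?_⟩
    · exact ih _ (fun w hw ↦ (parts w hw).1) α hα β hβ
    · exact ih _ (fun w hw ↦ (parts w hw).2.1) α hα β hβ
    · exact ih _ (fun w hw ↦ (parts w hw).2.2.1) α hα β hβ
    · exact ih _ (fun w hw ↦ (parts w hw).2.2.2) α hα β hβ

end SesqPoly

lemma norm_sq_sum_smul {κ E : Type*} [NormedAddCommGroup E] [InnerProductSpace ℂ E]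
    (s : Finset κ) (c : κ → ℂ) (v : κ → E) :
    (‖∑ i ∈ s, c i • v i‖ : ℂ) ^ 2 =
      ∑ i ∈ s, ∑ j ∈ s, inner ℂ (v j) (v i) * c i * conj (c j) := by
  rw [← RCLike.ofReal_eq_complex_ofReal, ← inner_self_eq_norm_sq_to_K, sum_inner, sum_comm]
  refine sum_congr rfl fun j _ ↦ ?_
  rw [inner_sum]
  refine sum_congr rfl fun i _ ↦ ?_
  rw [inner_smul_left, inner_smul_right]
  ring

section Fintype

variable {ι E : Type*} [Fintype ι] [NormedAddCommGroup E] [InnerProductSpace ℂ E]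

lemma card_compl_inter_compl [DecidableEq ι] (α β : Finset ι) :
    (αᶜ ∩ βᶜ).card = Fintype.card ι + (α ∩ β).card - (α.card + β.card) := by
  have := card_union_add_card_inter α β
  have := card_le_univ (α ∪ β)
  rw [← compl_union, card_compl]
  omega

lemma prod_compl_eq_prod_mul_prod_inv [DecidableEq ι] (s : Finset ι)
    {w : ι → ℂ} (hw : ∀ i, w i ≠ 0) : ∏ i ∈ sᶜ, w i = (∏ i, w i) * ∏ i ∈ s, (w i)⁻¹ := by
  rw [← prod_mul_prod_compl s, prod_inv_distrib, mul_comm (∏ i ∈ s, w i), mul_assoc,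
    mul_inv_cancel₀ (prod_ne_zero_iff.mpr fun i _ ↦ hw i), mul_one]

lemma norm_sq_sum_prod_smul (v : Finset ι → E) (w : ι → ℂ) :
    (‖∑ α, (∏ i ∈ α, w i) • v α‖ : ℂ) ^ 2 = sesqPoly univ (fun α β ↦ inner ℂ (v β) (v α)) w := by
  simp only [norm_sq_sum_smul, sesqPoly, powerset_univ, map_prod]

lemma norm_sq_prod_mul_norm_sq_sum_prod_inv_smul [DecidableEq ι] (v : Finset ι → E) {w : ι → ℂ}
    (hw : ∀ i, w i ≠ 0) :
    (‖∏ i, w i‖ : ℂ) ^ 2 * (‖∑ α, (∏ i ∈ α, (conj (w i))⁻¹) • v α‖ : ℂ) ^ 2 =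
      sesqPoly univ (fun α β ↦ inner ℂ (v αᶜ) (v βᶜ)) w := by
  have hw' : ∀ i, conj (w i) ≠ 0 := fun i ↦ (map_ne_zero _).mpr (hw i)
  rw [← mul_conj', norm_sq_sum_smul, mul_sum, sesqPoly, powerset_univ, sum_comm]
  refine Fintype.sum_equiv (Equiv.ofBijective _ compl_involutive.bijective) _ _ fun β ↦ ?_
  rw [mul_sum]
  refine Fintype.sum_equiv (Equiv.ofBijective _ compl_involutive.bijective) _ _ fun α ↦ ?_
  simp only [Equiv.ofBijective_apply, compl_compl, prod_compl_eq_prod_mul_prod_inv _ hw,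
    prod_compl_eq_prod_mul_prod_inv _ hw', map_prod, map_inv₀, conj_conj]
  ring

end Fintype

/-- if `B(w) = ∑_{α ⊆ [m]} B_α w^α` is a vector-valued multi-affine
polynomial with `⟨B_α, B_β⟩ = B^{|α∩β|}_{|α|,|β|}` and `|B(w)|²` is `𝕋^m`-symmetric,
then `B^i_{j,k} = B^{m−j−k+i}_{m−k,m−j}` (here `m` plays the role of `d−1`). -/
theorem stmt7 (m N : ℕ) (Bc : Finset (Fin m) → EuclideanSpace ℂ (Fin N))
    (Bn : ℕ → ℕ → ℕ → ℂ)
    (hBn : ∀ α β : Finset (Fin m),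
      (inner ℂ (Bc β) (Bc α) : ℂ) = Bn (α ∩ β).card α.card β.card)
    (hT : ∀ w : Fin m → ℂ, (∀ i, w i ≠ 0) →
      ‖∑ α : Finset (Fin m), (∏ i ∈ α, w i) • Bc α‖ ^ 2 =
        ‖∏ i, w i‖ ^ 2 *
          ‖∑ α : Finset (Fin m), (∏ i ∈ α, (conj (w i))⁻¹) • Bc α‖ ^ 2) :
    ∀ α β : Finset (Fin m),
      Bn (α ∩ β).card α.card β.card =
        Bn (m + (α ∩ β).card - (α.card + β.card)) (m - β.card) (m - α.card) := by
  have hpoly (w : Fin m → ℂ) (hw : ∀ i ∈ univ, w i ≠ 0) :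
      sesqPoly univ ((fun α β ↦ inner ℂ (Bc β) (Bc α)) - fun α β ↦ inner ℂ (Bc αᶜ) (Bc βᶜ)) w
        = 0 := by
    have h := congrArg ((↑) : ℝ → ℂ) (hT w fun i ↦ hw i (mem_univ i))
    push_cast at h
    rw [sesqPoly_sub, ← norm_sq_sum_prod_smul,
      ← norm_sq_prod_mul_norm_sq_sum_prod_inv_smul _ fun i ↦ hw i (mem_univ i), h, sub_self]
  intro α β
  have h : inner ℂ (Bc β) (Bc α) = inner ℂ (Bc αᶜ) (Bc βᶜ) :=
    sub_eq_zero.mp (eq_zero_of_sesqPoly_eq_zero univ _ hpoly α (subset_univ α) β (subset_univ β))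
  rw [hBn, hBn, card_compl_inter_compl, card_compl, card_compl, Fintype.card_fin] at h
  simpa only [inter_comm β α, add_comm β.card] using h
end
end

section
/- Let p ∈ ℂ[z_1,z_2,z_3] be multi-affine and stable, and write p(z_1,z_2,z_3) = a(z_1,z_2) + b(z_1,z_2)·z_3. Let b̃(z_1,z_2) = z_1 z_2·conj(b(1/conj(z_1),1/conj(z_2))) be the reflection of b at bidegree (1,1). Then |b̃(z_1,z_2)| < |a(z_1,z_2)| for all (z_1,z_2) in the closed bidisk {(z_1,z_2) : |z_1| ≤ 1, |z_2| ≤ 1}; in particular, the polynomial a + b̃ has no zeros on the closed bidisk. -/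
/-!
Stability of `p = a + b z₃` forces `|b| < |a|` on the closed bidisk: otherwise `z₃ = -a/b` is a
zero of `p` there. On the torus `|b̃| = |b|`, so by compactness `|b̃| ≤ M |a|` on the torus for
some `M < 1`. Since `a` has no zeros on the closed bidisk, `b̃ / a` is holomorphic in each variable
there, and the maximum principle applied in one variable after the other carries the bound to the
whole closed bidisk.
-/

open MvPolynomial Complex ComplexConjugate Finset

noncomputable section

/-- A polynomial is *stable* if it has no zeros on the closed unit polydisk. -/
def IsStable {n : ℕ} (p : MvPolynomial (Fin n) ℂ) : Prop :=
  ∀ z : Fin n → ℂ, (∀ i, ‖z i‖ ≤ 1) → eval z p ≠ 0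

/-- `pt` is the reflection of the multi-affine polynomial `p`
(at multidegree `(1,…,1)`):  `p̃(z) = z₁⋯zₙ · conj (p (1/conj z₁, …, 1/conj zₙ))`. -/
def IsReflection {n : ℕ} (p pt : MvPolynomial (Fin n) ℂ) : Prop :=
  ∀ z : Fin n → ℂ, (∀ i, z i ≠ 0) →
    eval z pt = (∏ i, z i) * conj (eval (fun i => (conj (z i))⁻¹) p)

/-- `qt` is the reflection of `q ∈ ℂ[z₁,z₂]` at bidegree `(1,1)`:
`q̃(z₁,z₂) = z₁ z₂ · conj (q (1/conj z₁, 1/conj z₂))`. -/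
def IsReflection2 (q qt : MvPolynomial (Fin 2) ℂ) : Prop :=
  ∀ z1 z2 : ℂ, z1 ≠ 0 → z2 ≠ 0 →
    eval ![z1, z2] qt = z1 * z2 * conj (eval ![(conj z1)⁻¹, (conj z2)⁻¹] q)

open Metric Bornology

theorem MvPolynomial.differentiable_eval_comp {σ : Type*} (q : MvPolynomial σ ℂ)
    {v : ℂ → σ → ℂ} (hv : ∀ i, Differentiable ℂ (v · i)) :
    Differentiable ℂ fun w => eval (v w) q := by
  induction q using MvPolynomial.induction_on with
  | C r => simp only [eval_C]; exact differentiable_const r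
  | add p q hp hq => simp only [eval_add]; exact hp.add hq
  | mul_X p i hp => simp only [eval_mul, eval_X]; exact hp.mul (hv i)

theorem MvPolynomial.differentiable_eval_vecCons_left (q : MvPolynomial (Fin 2) ℂ) (c : ℂ) :
    Differentiable ℂ fun w => eval ![w, c] q :=
  q.differentiable_eval_comp <| Fin.forall_fin_two.2
    ⟨differentiable_id, differentiable_const c⟩

theorem MvPolynomial.differentiable_eval_vecCons_right (q : MvPolynomial (Fin 2) ℂ) (c : ℂ) :
    Differentiable ℂ fun w => eval ![c, w] q :=
  q.differentiable_eval_comp <| Fin.forall_fin_two.2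
    ⟨differentiable_const c, differentiable_id⟩

theorem MvPolynomial.continuous_eval_vecCons_prod (q : MvPolynomial (Fin 2) ℂ) :
    Continuous fun z : ℂ × ℂ => eval ![z.1, z.2] q :=
  (continuous_eval q).comp <| continuous_pi <| Fin.forall_fin_two.2
    ⟨continuous_fst, continuous_snd⟩

theorem IsCompact.exists_lt_one_forall_norm_le_mul {X E F : Type*} [TopologicalSpace X]
    [SeminormedAddCommGroup E] [SeminormedAddCommGroup F] {K : Set X} (hK : IsCompact K)
    {f : X → E} {g : X → F} (hf : ContinuousOn f K) (hg : ContinuousOn g K)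
    (hlt : ∀ x ∈ K, ‖f x‖ < ‖g x‖) : ∃ M < 1, ∀ x ∈ K, ‖f x‖ ≤ M * ‖g x‖ := by
  rcases K.eq_empty_or_nonempty with rfl | hne
  · exact ⟨0, zero_lt_one, by simp⟩
  have hg_pos : ∀ x ∈ K, 0 < ‖g x‖ := fun x hx => (norm_nonneg _).trans_lt (hlt x hx)
  obtain ⟨x₀, hx₀, hmax⟩ :=
    hK.exists_isMaxOn hne (hf.norm.div hg.norm fun x hx => (hg_pos x hx).ne')
  refine ⟨‖f x₀‖ / ‖g x₀‖, (div_lt_one (hg_pos x₀ hx₀)).2 (hlt x₀ hx₀), fun x hx => ?_⟩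
  rw [← div_le_iff₀ (hg_pos x hx)]
  exact hmax hx

theorem Complex.norm_le_mul_norm_of_forall_mem_frontier {U : Set ℂ} (hU : IsBounded U)
    {f g : ℂ → ℂ} (hf : Differentiable ℂ f) (hg : Differentiable ℂ g)
    (hg0 : ∀ z ∈ closure U, g z ≠ 0) {M : ℝ}
    (hM : ∀ z ∈ frontier U, ‖f z‖ ≤ M * ‖g z‖) :
    ∀ z ∈ closure U, ‖f z‖ ≤ M * ‖g z‖ := by
  have hquot : DiffContOnCl ℂ (fun z => f z / g z) U :=
    (hf.differentiableOn.div hg.differentiableOn hg0).diffContOnCl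
  have hquot_le : ∀ z ∈ closure U, ‖f z / g z‖ ≤ M ↔ ‖f z‖ ≤ M * ‖g z‖ := fun z hz => by
    rw [norm_div, div_le_iff₀ (norm_pos_iff.2 (hg0 z hz))]
  intro z hz
  refine (hquot_le z hz).1 (norm_le_of_forall_mem_frontier_norm_le hU hquot (fun w hw => ?_) hz)
  exact (hquot_le w (frontier_subset_closure hw)).2 (hM w hw)

theorem Complex.norm_le_mul_norm_of_forall_mem_frontier_prod {U V : Set ℂ} (hU : IsBounded U)
    (hV : IsBounded V) {F G : ℂ → ℂ → ℂ}
    (hF₁ : ∀ w, Differentiable ℂ (F · w)) (hF₂ : ∀ z, Differentiable ℂ (F z))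
    (hG₁ : ∀ w, Differentiable ℂ (G · w)) (hG₂ : ∀ z, Differentiable ℂ (G z))
    (hG0 : ∀ z ∈ closure U, ∀ w ∈ closure V, G z w ≠ 0) {M : ℝ}
    (hM : ∀ z ∈ frontier U, ∀ w ∈ frontier V, ‖F z w‖ ≤ M * ‖G z w‖) :
    ∀ z ∈ closure U, ∀ w ∈ closure V, ‖F z w‖ ≤ M * ‖G z w‖ := by
  have hfrontier : ∀ z ∈ frontier U, ∀ w ∈ closure V, ‖F z w‖ ≤ M * ‖G z w‖ := fun z hz =>
    norm_le_mul_norm_of_forall_mem_frontier hV (hF₂ z) (hG₂ z)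
      (hG0 z (frontier_subset_closure hz)) (hM z hz)
  intro z hz w hw
  exact norm_le_mul_norm_of_forall_mem_frontier hU (hF₁ w) (hG₁ w)
    (fun z hz => hG0 z hz w hw) (fun z hz => hfrontier z hz w hw) z hz

theorem Complex.exists_norm_le_one_add_mul_eq_zero {a b : ℂ} (h : ‖a‖ ≤ ‖b‖) :
    ∃ w : ℂ, ‖w‖ ≤ 1 ∧ a + b * w = 0 := by
  -- `-(a / b)` is `0` when `b = 0`, and then `a = 0` as well
  refine ⟨-(a / b), by simpa [norm_div] using div_le_one_of_le₀ h (norm_nonneg b), ?_⟩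
  rcases eq_or_ne b 0 with rfl | hb
  · simpa using h
  · rw [mul_neg, mul_div_cancel₀ a hb, add_neg_cancel]

theorem IsStable.norm_eval_lt {p : MvPolynomial (Fin 3) ℂ} {a b : MvPolynomial (Fin 2) ℂ}
    (hst : IsStable p) (hp : ∀ z : Fin 3 → ℂ,
      eval z p = eval ![z 0, z 1] a + eval ![z 0, z 1] b * z 2)
    {z1 z2 : ℂ} (h1 : ‖z1‖ ≤ 1) (h2 : ‖z2‖ ≤ 1) :
    ‖eval ![z1, z2] b‖ < ‖eval ![z1, z2] a‖ := by
  by_contra! hle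
  obtain ⟨w, hw, hzero⟩ := exists_norm_le_one_add_mul_eq_zero hle
  refine hst ![z1, z2, w] (fun i => ?_) (by simpa [hp] using hzero)
  fin_cases i <;> simpa

theorem IsReflection2.norm_eval_eq {q qt : MvPolynomial (Fin 2) ℂ} (hqt : IsReflection2 q qt)
    {z1 z2 : ℂ} (h1 : ‖z1‖ = 1) (h2 : ‖z2‖ = 1) :
    ‖eval ![z1, z2] qt‖ = ‖eval ![z1, z2] q‖ := by
  rw [hqt z1 z2 (norm_ne_zero_iff.1 (h1 ▸ one_ne_zero)) (norm_ne_zero_iff.1 (h2 ▸ one_ne_zero)),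
    ← inv_eq_conj h1, ← inv_eq_conj h2, inv_inv, inv_inv, norm_mul, norm_mul, h1, h2,
    RCLike.norm_conj, one_mul, one_mul]

theorem stmt12_general (p : MvPolynomial (Fin 3) ℂ) (a b bt : MvPolynomial (Fin 2) ℂ)
    (hst : IsStable p)
    (hp : ∀ z : Fin 3 → ℂ,
      eval z p = eval ![z 0, z 1] a + eval ![z 0, z 1] b * z 2)
    (hbt : IsReflection2 b bt) :
    ∀ z1 z2 : ℂ, ‖z1‖ ≤ 1 → ‖z2‖ ≤ 1 →
      ‖eval ![z1, z2] bt‖ < ‖eval ![z1, z2] a‖ ∧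
      eval ![z1, z2] (a + bt) ≠ 0 := by
  have ha_pos {z1 z2 : ℂ} (h1 : ‖z1‖ ≤ 1) (h2 : ‖z2‖ ≤ 1) : 0 < ‖eval ![z1, z2] a‖ :=
    (norm_nonneg _).trans_lt (hst.norm_eval_lt hp h1 h2)
  have htorus : ∀ z ∈ sphere (0 : ℂ) 1 ×ˢ sphere (0 : ℂ) 1,
      ‖eval ![z.1, z.2] bt‖ < ‖eval ![z.1, z.2] a‖ := by
    rintro ⟨z1, z2⟩ ⟨h1, h2⟩
    rw [mem_sphere_zero_iff_norm] at h1 h2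
    rw [hbt.norm_eval_eq h1 h2]
    exact hst.norm_eval_lt hp h1.le h2.le
  obtain ⟨M, hM1, hM⟩ :=
    ((isCompact_sphere 0 1).prod (isCompact_sphere 0 1)).exists_lt_one_forall_norm_le_mul
      (continuous_eval_vecCons_prod bt).continuousOn
      (continuous_eval_vecCons_prod a).continuousOn htorus
  have hbidisk : ∀ z1 z2 : ℂ, ‖z1‖ ≤ 1 → ‖z2‖ ≤ 1 →
      ‖eval ![z1, z2] bt‖ ≤ M * ‖eval ![z1, z2] a‖ := by
    have := norm_le_mul_norm_of_forall_mem_frontier_prod (U := ball (0 : ℂ) 1)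
      (V := ball (0 : ℂ) 1) isBounded_ball isBounded_ball bt.differentiable_eval_vecCons_left
      bt.differentiable_eval_vecCons_right a.differentiable_eval_vecCons_left
      a.differentiable_eval_vecCons_right (M := M)
    simp only [closure_ball _ one_ne_zero, frontier_ball _ one_ne_zero, mem_closedBall_zero_iff,
      mem_sphere_zero_iff_norm] at this
    exact fun z1 z2 h1 h2 => this (fun z hz w hw => norm_pos_iff.1 (ha_pos hz hw))
      (fun z hz w hw => hM (z, w) ⟨by simpa, by simpa⟩) z1 h1 z2 h2
  intro z1 z2 h1 h2
  have hlt : ‖eval ![z1, z2] bt‖ < ‖eval ![z1, z2] a‖ :=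
    (hbidisk z1 z2 h1 h2).trans_lt (mul_lt_of_lt_one_left (ha_pos h1 h2) hM1)
  refine ⟨hlt, fun h => hlt.ne ?_⟩
  rw [eval_add, add_comm] at h
  rw [eq_neg_of_add_eq_zero_left h, norm_neg]

/-- for a stable multi-affine `p = a(z₁,z₂) + b(z₁,z₂) z₃`,
`|b̃| < |a|` on the closed bidisk; in particular `a + b̃` has no zeros there. -/
theorem stmt12 (p : MvPolynomial (Fin 3) ℂ) (a b bt : MvPolynomial (Fin 2) ℂ)
    (hma : ∀ i, p.degreeOf i ≤ 1) (hst : IsStable p)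
    (hmaa : ∀ i, a.degreeOf i ≤ 1) (hmab : ∀ i, b.degreeOf i ≤ 1)
    (hp : ∀ z : Fin 3 → ℂ,
      eval z p = eval ![z 0, z 1] a + eval ![z 0, z 1] b * z 2)
    (hbt : IsReflection2 b bt) :
    ∀ z1 z2 : ℂ, ‖z1‖ ≤ 1 → ‖z2‖ ≤ 1 →
      ‖eval ![z1, z2] bt‖ < ‖eval ![z1, z2] a‖ ∧
      eval ![z1, z2] (a + bt) ≠ 0 :=
  stmt12_general p a b bt hst hp hbt
end
end

section
/- For every integer d ≥ 1 and all z = (z_1,…,z_d) ∈ ℂ^d: 1 − |z_1 z_2 ⋯ z_d|² = ∑_{j=1}^d (1 − |z_j|²) · ∑_{α ⊆ {1,…,d}∖{j}} |z^α|² / (d · C(d−1, |α|)), where C(n,k) denotes the binomial coefficient. -/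
/-
Put `w i = ‖z i‖²` and `c k = (n * C(n-1, k))⁻¹` with `n = d`. Expanding the right-hand side in the
monomials `w^β`, the coefficient of `w^β` is `(n - |β|) c |β| - |β| c (|β| - 1)`: a term
`c |β| w^β` for each `j ∉ β`, and `-c (|β| - 1) w^β` for each `j ∈ β`, from `α = β \ {j}`.
Since `(n - 1 - m) C(n-1, m) = (m + 1) C(n-1, m+1)`, this vanishes unless `β = ∅`, where it is `1`,
or `β = univ`, where it is `-1`.
-/

open Complex Finset

section
variable {ι R : Type*} [Fintype ι] [DecidableEq ι] [CommRing R]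

theorem one_sub_mul_sum_powerset_erase (w : ι → R) (c : ℕ → R) (j : ι) :
    (1 - w j) * ∑ α ∈ (univ.erase j).powerset, (∏ i ∈ α, w i) * c #α =
      ∑ β : Finset ι, (if j ∈ β then -c (#β - 1) else c #β) * ∏ i ∈ β, w i := by
  have hj : j ∉ univ.erase j := notMem_erase j univ
  conv_rhs => rw [← powerset_univ, ← insert_erase (mem_univ j), sum_powerset_insert hj]
  rw [sub_mul, one_mul, mul_sum, sub_eq_add_neg, ← sum_neg_distrib]
  congr 1 <;> refine sum_congr rfl fun α hα => ?_
  · have : j ∉ α := fun h => hj (mem_powerset.mp hα h)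
    simp [this, mul_comm]
  · have : j ∉ α := fun h => hj (mem_powerset.mp hα h)
    simp only [mem_insert_self, ↓reduceIte, card_insert_of_notMem this, add_tsub_cancel_right,
      prod_insert this]
    ring

theorem sum_one_sub_mul_sum_powerset_erase (w : ι → R) (c : ℕ → R) :
    ∑ j, (1 - w j) * ∑ α ∈ (univ.erase j).powerset, (∏ i ∈ α, w i) * c #α =
      ∑ β : Finset ι, (#βᶜ * c #β - #β * c (#β - 1)) * ∏ i ∈ β, w i := by
  simp_rw [one_sub_mul_sum_powerset_erase]
  rw [sum_comm]
  refine sum_congr rfl fun β _ => ?_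
  rw [← sum_mul, sum_ite, sum_const, sum_const]
  simp only [filter_mem_eq_inter, univ_inter, filter_not, ← compl_eq_univ_sdiff, nsmul_eq_mul]
  ring
end

section
variable {K : Type*} [Field K] [CharZero K]

theorem cast_sub_mul_inv_mul_choose (n k : ℕ) (hk : 0 < k) (hkn : k < n) :
    ((n - k : ℕ) : K) * ((n : K) * (n - 1).choose k)⁻¹ =
      k * ((n : K) * (n - 1).choose (k - 1))⁻¹ := by
  obtain ⟨m, rfl⟩ := Nat.exists_eq_succ_of_ne_zero hk.ne'
  have hchoose := Nat.choose_succ_right_eq (n - 1) m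
  rw [show n - 1 - m = n - (m + 1) by omega] at hchoose
  have : ((n - 1).choose (m + 1) : K) ≠ 0 := by
    exact_mod_cast (Nat.choose_pos (by omega)).ne'
  have : ((n - 1).choose m : K) ≠ 0 := by
    exact_mod_cast (Nat.choose_pos (by omega)).ne'
  have : (n : K) ≠ 0 := by exact_mod_cast (by omega : n ≠ 0)
  rw [Nat.succ_sub_one]
  field_simp
  rw [mul_comm]
  exact_mod_cast hchoose.symm

variable {ι : Type*} [Fintype ι] [DecidableEq ι]

theorem one_sub_prod_eq_sum_one_sub_mul_sum (w : ι → K) :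
    1 - ∏ i, w i = ∑ j, (1 - w j) * ∑ α ∈ (univ.erase j).powerset,
        (∏ i ∈ α, w i) / ((Fintype.card ι : K) * (Fintype.card ι - 1).choose #α) := by
  rcases isEmpty_or_nonempty ι with hι | hι
  · simp
  set n := Fintype.card ι
  have hn : (n : K) ≠ 0 := by exact_mod_cast Fintype.card_ne_zero
  have hcoeff : ∀ β : Finset ι, β ≠ ∅ → β ≠ univ →
      (#βᶜ : K) * ((n : K) * (n - 1).choose #β)⁻¹ - #β * ((n : K) * (n - 1).choose (#β - 1))⁻¹
        = 0 := by
    intro β h0 h1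
    rw [card_compl, sub_eq_zero]
    exact cast_sub_mul_inv_mul_choose n #β (card_pos.mpr (nonempty_iff_ne_empty.mpr h0))
      (by simpa using card_lt_card (ssubset_univ_iff.mpr h1))
  simp_rw [div_eq_mul_inv]
  rw [sum_one_sub_mul_sum_powerset_erase w (fun k => ((n : K) * (n - 1).choose k)⁻¹),
    Fintype.sum_eq_add ∅ univ univ_nonempty.ne_empty.symm
      (fun β ⟨h0, h1⟩ => by rw [hcoeff β h0 h1, zero_mul])]
  simp [n, hn, sub_eq_add_neg]
end

theorem stmt13_general (d : ℕ) (z : Fin d → ℂ) :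
    1 - ‖∏ i, z i‖ ^ 2 =
      ∑ j, (1 - ‖z j‖ ^ 2) *
        ∑ α ∈ (Finset.univ.erase j).powerset,
          ‖∏ i ∈ α, z i‖ ^ 2 / ((d : ℝ) * ((d - 1).choose α.card : ℝ)) := by
  simpa [norm_prod, ← prod_pow] using one_sub_prod_eq_sum_one_sub_mul_sum (fun i => ‖z i‖ ^ 2)

/-- for every `d ≥ 1` and `z ∈ ℂ^d`,
`1 − |z₁⋯z_d|² = ∑ⱼ (1 − |zⱼ|²) ∑_{α ⊆ [d]∖{j}} |z^α|² / (d·C(d−1,|α|))`. -/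
theorem stmt13 (d : ℕ) (hd : 1 ≤ d) (z : Fin d → ℂ) :
    1 - ‖∏ i, z i‖ ^ 2 =
      ∑ j, (1 - ‖z j‖ ^ 2) *
        ∑ α ∈ (Finset.univ.erase j).powerset,
          ‖∏ i ∈ α, z i‖ ^ 2 / ((d : ℝ) * ((d - 1).choose α.card : ℝ)) :=
  stmt13_general d z
end

section
/- Let p ∈ ℂ[z_1,…,z_n] be an Agler denominator of multidegree (d_1,…,d_n). Then there exists a sums-of-squares decomposition |p(z)|² − |p̃(z)|² = ∑_{j=1}^n (1 − |z_j|²)·SOS_j(z) in which each SOS_j is a sum of squared moduli of at most d_j·∏_{k≠j}(d_k + 1) polynomials, each of degree at most d_j − 1 in z_j and at most d_k in z_k for every k ≠ j. -/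
/-!
Fix a variable `z_v` and put the other variables at a point with all `|z_i| > 1`. Polarizing
the Agler identity in `z_v` (an identity in `w` and `w̄` valid for all `w ∈ ℂ` is a polynomial
identity in two independent variables) and comparing the coefficients of `w^m w̄^m` for
`m ≥ d_v`, where `p` and `p̃` contribute nothing, shows that `F(m) = ∑_k |coeff_m A_{v,k}|²`
is nondecreasing from `m = d_v` on. Since `F` vanishes for large `m`, it vanishes from `d_v`
on, and then so do the coefficients of `z_v^{m+1}` in the `A_{i,k}`, `i ≠ v`. As this holds on
a product of infinite sets, each `A_{j,k}` is supported on the box `α_j < d_j`, `α_i ≤ d_i`.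
Finally, a sum of squared moduli of polynomials supported on a finite set `S` of monomials can
be rewritten with `|S|` terms by factoring its Gram matrix as `MᴴM = UᴴU` with `U` square.
-/

open MvPolynomial Complex ComplexConjugate Finset

noncomputable section

/-- `pt` is the reflection of `p` at multidegree `d`:
`p̃(z) = z₁^{d₁}⋯zₙ^{dₙ} · conj (p (1/conj z₁, …, 1/conj zₙ))`. -/
def IsReflectionAt {n : ℕ} (d : Fin n → ℕ) (p pt : MvPolynomial (Fin n) ℂ) : Prop :=
  ∀ z : Fin n → ℂ, (∀ i, z i ≠ 0) →
    eval z pt = (∏ i, z i ^ d i) * conj (eval (fun i => (conj (z i))⁻¹) p)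

open scoped Polynomial.Bivariate

lemma le_of_le_succ_of_eventually_eq {α : Type*} [Preorder α] {F : ℕ → α} {d m : ℕ} {a : α}
    (hmono : ∀ m, d ≤ m → F m ≤ F (m + 1)) (hF : ∀ᶠ m in Filter.atTop, F m = a) (hm : d ≤ m) :
    F m ≤ a := by
  obtain ⟨D, hD⟩ := Filter.eventually_atTop.1 hF
  calc F m ≤ F (max m D) := Nat.rel_of_forall_rel_succ_of_le_of_le _ hmono hm (le_max_left _ _)
    _ = a := hD _ (le_max_right _ _)

namespace Polynomial

lemma eval_eval₂_compRingHom {R : Type*} [CommSemiring R] (P : R[X][Y]) (a b : R[X]) (t : R) :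
    (P.eval₂ (compRingHom a) b).eval t = P.evalEval (a.eval t) (b.eval t) := by
  induction P using Polynomial.induction_on' with
  | add p q hp hq => simp [eval₂_add, hp, hq]
  | monomial n c => simp [evalEval, eval_comp]

lemma evalEval_eq_zero_of_forall_real (P : ℂ[X][Y]) (a b : ℂ[X])
    (h : ∀ r : ℝ, P.evalEval (a.eval (r : ℂ)) (b.eval (r : ℂ)) = 0) (t : ℂ) :
    P.evalEval (a.eval t) (b.eval t) = 0 := by
  have hq : P.eval₂ (compRingHom a) b = 0 := by
    refine eq_zero_of_infinite_isRoot _ ((Set.infinite_range_of_injective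
      Complex.ofReal_injective).mono ?_)
    rintro - ⟨r, rfl⟩
    simpa [IsRoot, eval_eval₂_compRingHom] using h r
  rw [← eval_eval₂_compRingHom, hq, eval_zero]

lemma eq_zero_of_forall_evalEval_eq_zero {R : Type*} [CommRing R] [IsDomain R] [Infinite R]
    {P : R[X][Y]} (h : ∀ x y, P.evalEval x y = 0) : P = 0 := by
  ext m : 1
  refine funext fun x => ?_
  have : P.map (evalRingHom x) = 0 := funext fun y => by
    rw [map_evalRingHom_eval, h, eval_zero]
  simpa using congrArg (fun Q => (Q.coeff m)) this

lemma eq_zero_of_forall_evalEval_conj_eq_zero {P : ℂ[X][Y]}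
    (h : ∀ w : ℂ, P.evalEval w (conj w) = 0) : P = 0 := by
  have hreal (t : ℂ) (y : ℝ) : P.evalEval (t + I * y) (t - I * y) = 0 := by
    have := evalEval_eq_zero_of_forall_real P (X + C (I * y)) (X - C (I * y))
      (fun x => by simpa [Complex.conj_ofReal, sub_eq_add_neg] using h (x + I * y)) t
    simpa only [eval_add, eval_sub, eval_X, eval_C] using this
  have hall (t u : ℂ) : P.evalEval (t + I * u) (t - I * u) = 0 := by
    have := evalEval_eq_zero_of_forall_real P (C t + C I * X) (C t - C I * X)
      (fun y => by simpa using hreal t y) u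
    simpa only [eval_add, eval_sub, eval_mul, eval_X, eval_C] using this
  refine eq_zero_of_forall_evalEval_eq_zero fun x y => ?_
  have hx : (x + y) / 2 + I * ((x - y) / (2 * I)) = x := by
    field_simp; ring
  have hy : (x + y) / 2 - I * ((x - y) / (2 * I)) = y := by
    field_simp; ring
  simpa only [hx, hy] using hall ((x + y) / 2) ((x - y) / (2 * I))

/-- The bivariate polynomial `g(X) · ḡ(Y)`, where `ḡ` has the conjugate coefficients; on the
"conjugate diagonal" `Y = X̄` it is `|g|²`. -/
def hermSq (g : ℂ[X]) : ℂ[X][Y] := C g * (g.map (starRingEnd ℂ)).map C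

lemma evalEval_hermSq (g : ℂ[X]) (w : ℂ) :
    (hermSq g).evalEval w (conj w) = ((‖g.eval w‖ ^ 2 : ℝ) : ℂ) := by
  rw [hermSq, evalEval_mul, evalEval_C, evalEval_map_C, eval_map_apply, Complex.mul_conj']
  push_cast; rfl

def diagCoeff (m : ℕ) : ℂ[X][Y] →ₗ[ℂ] ℂ :=
  (lcoeff ℂ m).comp ((lcoeff ℂ[X] m).restrictScalars ℂ)

lemma diagCoeff_apply (m : ℕ) (P : ℂ[X][Y]) : diagCoeff m P = (P.coeff m).coeff m := rfl

lemma diagCoeff_hermSq (m : ℕ) (g : ℂ[X]) :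
    diagCoeff m (hermSq g) = ((‖g.coeff m‖ ^ 2 : ℝ) : ℂ) := by
  rw [diagCoeff_apply, hermSq, coeff_C_mul, coeff_map, coeff_mul_C, coeff_map,
    Complex.mul_conj']
  push_cast; rfl

lemma diagCoeff_succ_one_sub_mul (m : ℕ) (P : ℂ[X][Y]) :
    diagCoeff (m + 1) ((1 - C X * X) * P) = diagCoeff (m + 1) P - diagCoeff m P := by
  simp only [diagCoeff_apply, sub_mul, one_mul, coeff_sub, mul_assoc, coeff_C_mul, coeff_X_mul]

section AglerIdentity

variable {κ ι : Type*} [Fintype κ] [Fintype ι] {d : ℕ} {g₀ g₁ : ℂ[X]} {G : κ → ℂ[X]}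
  {H : ι → ℂ[X]} {c : ι → ℝ}

lemma sum_norm_sq_coeff_eq_of_agler_identity (h₀ : g₀.natDegree ≤ d) (h₁ : g₁.natDegree ≤ d)
    (hid : ∀ w : ℂ, ‖g₀.eval w‖ ^ 2 - ‖g₁.eval w‖ ^ 2 =
      (1 - ‖w‖ ^ 2) * ∑ k, ‖(G k).eval w‖ ^ 2 + ∑ i, c i * ‖(H i).eval w‖ ^ 2)
    {m : ℕ} (hm : d ≤ m) :
    ∑ k, ‖(G k).coeff m‖ ^ 2 =
      ∑ k, ‖(G k).coeff (m + 1)‖ ^ 2 + ∑ i, c i * ‖(H i).coeff (m + 1)‖ ^ 2 := by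
  -- `hid` with `w̄` replaced by an independent variable
  have master : hermSq g₀ =
      hermSq g₁ + (1 - C X * X) * ∑ k, hermSq (G k) + ∑ i, (c i : ℂ) • hermSq (H i) := by
    rw [← sub_eq_zero]
    refine eq_zero_of_forall_evalEval_conj_eq_zero fun w => ?_
    simp only [evalEval_sub, evalEval_add, evalEval_mul, evalEval_finsetSum, evalEval_smul,
      evalEval_hermSq, evalEval_one, evalEval_C, evalEval_X, eval_X, Complex.mul_conj',
      smul_eq_mul]
    exact_mod_cast sub_eq_zero.2 (by linear_combination hid w)
  have := congrArg (diagCoeff (m + 1)) master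
  simp only [map_add, map_sum, map_smul, diagCoeff_hermSq, diagCoeff_succ_one_sub_mul,
    coeff_eq_zero_of_natDegree_lt (h₀.trans_lt (Nat.lt_succ_of_le hm)), smul_eq_mul,
    coeff_eq_zero_of_natDegree_lt (h₁.trans_lt (Nat.lt_succ_of_le hm)), norm_zero,
    ofReal_zero, zero_add, ne_eq, OfNat.ofNat_ne_zero, not_false_eq_true, zero_pow] at this
  have : (0 : ℝ) = ∑ k, ‖(G k).coeff (m + 1)‖ ^ 2 - ∑ k, ‖(G k).coeff m‖ ^ 2 +
      ∑ i, c i * ‖(H i).coeff (m + 1)‖ ^ 2 := by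
    exact_mod_cast this
  linarith

theorem coeff_eq_zero_of_agler_identity (h₀ : g₀.natDegree ≤ d) (h₁ : g₁.natDegree ≤ d)
    (hc : ∀ i, c i < 0)
    (hid : ∀ w : ℂ, ‖g₀.eval w‖ ^ 2 - ‖g₁.eval w‖ ^ 2 =
      (1 - ‖w‖ ^ 2) * ∑ k, ‖(G k).eval w‖ ^ 2 + ∑ i, c i * ‖(H i).eval w‖ ^ 2) :
    (∀ k m, d ≤ m → (G k).coeff m = 0) ∧ ∀ i m, d < m → (H i).coeff m = 0 := by
  set F : ℕ → ℝ := fun m => ∑ k, ‖(G k).coeff m‖ ^ 2 with hF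
  have step (m : ℕ) (hm : d ≤ m) : F m = F (m + 1) + ∑ i, c i * ‖(H i).coeff (m + 1)‖ ^ 2 :=
    sum_norm_sq_coeff_eq_of_agler_identity h₀ h₁ hid hm
  have hterm_nonpos (i : ι) (m : ℕ) : c i * ‖(H i).coeff m‖ ^ 2 ≤ 0 :=
    mul_nonpos_of_nonpos_of_nonneg (hc i).le (by positivity)
  have hF_eventually : ∀ᶠ m in Filter.atTop, F m = 0 := by
    have : ∀ᶠ m in Filter.atTop, ∀ k, (G k).coeff m = 0 := Filter.eventually_all.2 fun k =>
      (Filter.eventually_gt_atTop _).mono fun m hm => coeff_eq_zero_of_natDegree_lt hm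
    exact this.mono fun m hm => by simp [hF, hm]
  have hF_zero (m : ℕ) (hm : d ≤ m) : F m = 0 :=
    le_antisymm (le_of_le_succ_of_eventually_eq (fun m hm => by
      linarith [step m hm, Finset.sum_nonpos (s := univ) fun i _ => hterm_nonpos i (m + 1)]) hF_eventually hm)
      (by positivity)
  refine ⟨fun k m hm => ?_, fun i m hm => ?_⟩
  · have := (Finset.sum_eq_zero_iff_of_nonneg fun k _ => by positivity).1 (hF_zero m hm) k
      (Finset.mem_univ k)
    simpa using this
  · obtain ⟨m, rfl⟩ := Nat.exists_eq_add_of_lt hm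
    have h0 : ∑ i, c i * ‖(H i).coeff (d + m + 1)‖ ^ 2 = 0 := by
      linarith [step (d + m) le_self_add, hF_zero (d + m) le_self_add,
        hF_zero (d + m + 1) (by omega)]
    have := (Finset.sum_eq_zero_iff_of_nonpos fun i _ => hterm_nonpos i _).1 h0 i
      (Finset.mem_univ i)
    simpa [(hc i).ne] using this

end AglerIdentity

end Polynomial

namespace MvPolynomial

variable {σ R : Type*} [CommSemiring R] [DecidableEq σ]

def polynomialIn (v : σ) : MvPolynomial σ R ≃ₐ[R] Polynomial (MvPolynomial {b // b ≠ v} R) :=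
  (renameEquiv R (Equiv.optionSubtypeNe v).symm).trans (optionEquivLeft R {b // b ≠ v})

lemma coeff_polynomialIn_ne_zero {q : MvPolynomial σ R} {α : σ →₀ ℕ} (hα : α ∈ q.support)
    (v : σ) : (polynomialIn v q).coeff (α v) ≠ 0 := by
  set e := (Equiv.optionSubtypeNe v).symm
  have hv : (α.mapDomain e) none = α v := by
    rw [← Equiv.optionSubtypeNe_symm_self v, Finsupp.mapDomain_apply e.injective]
  intro h
  apply mem_support_iff.1 hα
  rw [← coeff_rename_mapDomain e e.injective, ← optionEquivLeft_coeff_some_coeff_none, hv]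
  simpa [polynomialIn] using congrArg (coeff _) h

def slice (v : σ) (s : {b // b ≠ v} → R) (q : MvPolynomial σ R) : Polynomial R :=
  (polynomialIn v q).map (eval s)

lemma eval_slice (v : σ) (s : {b // b ≠ v} → R) (q : MvPolynomial σ R) (w : R) :
    (slice v s q).eval w = eval (fun i => if h : i = v then w else s ⟨i, h⟩) q := by
  rw [slice, polynomialIn, AlgEquiv.trans_apply, ← optionEquivLeft_elim_eval, renameEquiv_apply,
    eval_rename]
  congr 2
  funext i
  by_cases hi : i = v
  · subst hi; simp
  · simp [Equiv.optionSubtypeNe_symm_of_ne hi, hi]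

lemma natDegree_slice_le (v : σ) (s : {b // b ≠ v} → R) (q : MvPolynomial σ R) :
    (slice v s q).natDegree ≤ degreeOf v q :=
  (Polynomial.natDegree_map_le ..).trans (degreeOf_eq_natDegree v q).ge

lemma coeff_slice (v : σ) (s : {b // b ≠ v} → R) (q : MvPolynomial σ R) (m : ℕ) :
    (slice v s q).coeff m = eval s ((polynomialIn v q).coeff m) :=
  Polynomial.coeff_map ..

end MvPolynomial

lemma Complex.setOf_one_lt_norm_infinite : {w : ℂ | 1 < ‖w‖}.Infinite :=
  Set.infinite_of_injective_forall_mem (f := fun n : ℕ => ((n + 2 : ℕ) : ℂ))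
    (Nat.cast_injective.comp (add_left_injective 2)) fun n => by
      change 1 < ‖((n + 2 : ℕ) : ℂ)‖
      rw [Complex.norm_natCast]; norm_cast; omega

def exponentBox {σ : Type*} [Fintype σ] (e : σ → ℕ) : Finset (σ →₀ ℕ) :=
  univ.finsupp fun i => range (e i)

lemma mem_exponentBox {σ : Type*} [Fintype σ] {e : σ → ℕ} {α : σ →₀ ℕ} :
    α ∈ exponentBox e ↔ ∀ i, α i < e i := by
  simp [exponentBox, mem_finsupp_iff]

lemma card_exponentBox {σ : Type*} [Fintype σ] (e : σ → ℕ) : #(exponentBox e) = ∏ i, e i := by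
  simp [exponentBox, card_finsupp]

section AglerDecomposition

variable {σ ι : Type*} [Fintype σ] [DecidableEq σ] [Fintype ι] {p pt : MvPolynomial σ ℂ}
  {A : σ → ι → MvPolynomial σ ℂ}

lemma agler_identity_slice
    (hA : ∀ z, ‖eval z p‖ ^ 2 - ‖eval z pt‖ ^ 2 =
      ∑ j, (1 - ‖z j‖ ^ 2) * ∑ k, ‖eval z (A j k)‖ ^ 2)
    (v : σ) (s : {b // b ≠ v} → ℂ) (w : ℂ) :
    ‖(slice v s p).eval w‖ ^ 2 - ‖(slice v s pt).eval w‖ ^ 2 =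
      (1 - ‖w‖ ^ 2) * ∑ k, ‖(slice v s (A v k)).eval w‖ ^ 2 +
        ∑ bk : {b // b ≠ v} × ι, (1 - ‖s bk.1‖ ^ 2) * ‖(slice v s (A bk.1 bk.2)).eval w‖ ^ 2 := by
  have hs (b : {b // b ≠ v}) : (if h : (b : σ) = v then w else s ⟨b, h⟩) = s b := dif_neg b.2
  simp only [eval_slice, hA, Fintype.sum_eq_add_sum_subtype_ne _ v, Fintype.sum_prod_type,
    Finset.mul_sum, dif_pos, hs]

theorem coeff_polynomialIn_eq_zero_of_agler_identity {d : σ → ℕ} (hp : ∀ i, degreeOf i p ≤ d i)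
    (hpt : ∀ i, degreeOf i pt ≤ d i)
    (hA : ∀ z, ‖eval z p‖ ^ 2 - ‖eval z pt‖ ^ 2 =
      ∑ j, (1 - ‖z j‖ ^ 2) * ∑ k, ‖eval z (A j k)‖ ^ 2) (v : σ) :
    (∀ k m, d v ≤ m → (polynomialIn v (A v k)).coeff m = 0) ∧
      ∀ j ≠ v, ∀ k m, d v < m → (polynomialIn v (A j k)).coeff m = 0 := by
  have hvanish (q : MvPolynomial {b // b ≠ v} ℂ)
      (hq : ∀ s : {b // b ≠ v} → ℂ, (∀ b, 1 < ‖s b‖) → eval s q = 0) : q = 0 :=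
    funext_set (fun _ => {w : ℂ | 1 < ‖w‖}) (fun _ => setOf_one_lt_norm_infinite)
      fun s hs => by simpa using hq s fun b => hs b trivial
  have key (s : {b // b ≠ v} → ℂ) (hs : ∀ b, 1 < ‖s b‖) :=
    Polynomial.coeff_eq_zero_of_agler_identity ((natDegree_slice_le v s p).trans (hp v))
      ((natDegree_slice_le v s pt).trans (hpt v)) (fun bk => by nlinarith [hs bk.1])
      (agler_identity_slice hA v s)
  refine ⟨fun k m hm => hvanish _ fun s hs => ?_, fun j hj k m hm => hvanish _ fun s hs => ?_⟩
  · simpa [coeff_slice] using (key s hs).1 k m hm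
  · simpa [coeff_slice] using (key s hs).2 (⟨j, hj⟩, k) m hm

theorem support_subset_exponentBox_of_agler_identity {d : σ → ℕ}
    (hp : ∀ i, degreeOf i p ≤ d i) (hpt : ∀ i, degreeOf i pt ≤ d i)
    (hA : ∀ z, ‖eval z p‖ ^ 2 - ‖eval z pt‖ ^ 2 =
      ∑ j, (1 - ‖z j‖ ^ 2) * ∑ k, ‖eval z (A j k)‖ ^ 2) (j : σ) (k : ι) :
    (A j k).support ⊆ exponentBox (Function.update (fun i => d i + 1) j (d j)) := by
  intro α hα
  refine mem_exponentBox.2 fun i => ?_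
  have hcoeff := coeff_polynomialIn_ne_zero hα i
  have hbounds := coeff_polynomialIn_eq_zero_of_agler_identity hp hpt hA i
  by_cases hij : i = j
  · subst hij
    simpa using not_le.1 fun h => hcoeff (hbounds.1 k _ h)
  · simpa [hij] using not_lt.1 fun h => hcoeff (hbounds.2 j (Ne.symm hij) k _ h)

end AglerDecomposition

lemma degreeOf_le_of_isReflectionAt {n : ℕ} {d : Fin n → ℕ} {p pt : MvPolynomial (Fin n) ℂ}
    (hp : ∀ i, degreeOf i p ≤ d i) (hpt : IsReflectionAt d p pt) (i : Fin n) :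
    degreeOf i pt ≤ d i := by
  set D : Fin n →₀ ℕ := Finsupp.equivFunOnFinite.symm d
  have hD (i : Fin n) : D i = d i := rfl
  have hle (α) (hα : α ∈ p.support) (i) : α i ≤ d i := (monomial_le_degreeOf i hα).trans (hp i)
  have hrefl : pt = ∑ α ∈ p.support, monomial (D - α) (conj (coeff α p)) := by
    refine funext_set (fun _ => {0}ᶜ) (fun _ => (Set.finite_singleton 0).infinite_compl)
      fun z hz => ?_
    have hz (i : Fin n) : z i ≠ 0 := hz i trivial
    rw [hpt z hz, eval_eq', map_sum, map_sum, Finset.mul_sum]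
    refine Finset.sum_congr rfl fun α hα => ?_
    simp only [eval_monomial, Finsupp.prod_fintype _ _ (fun i => pow_zero (z i)), map_mul,
      map_prod, map_pow, map_inv₀, Complex.conj_conj, Finsupp.tsub_apply, hD]
    rw [Finset.prod_congr rfl fun i _ => pow_sub₀ (z i) (hz i) (hle α hα i),
      Finset.prod_mul_distrib, Finset.prod_inv_distrib]
    simp only [inv_pow, Finset.prod_inv_distrib]
    ring
  rw [hrefl]
  refine (degreeOf_sum_le _ _ _).trans (Finset.sup_le fun α _ => ?_)
  refine degreeOf_le_iff.2 fun β hβ => ?_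
  obtain rfl := Finset.mem_singleton.1 (support_monomial_subset hβ)
  exact tsub_le_self

section GramMatrix

open Matrix

lemma Matrix.sum_norm_sq_mulVec {𝕜 m n : Type*} [RCLike 𝕜] [Fintype m] [Fintype n]
    (A : Matrix m n 𝕜) (x : n → 𝕜) :
    ((∑ k, ‖(A *ᵥ x) k‖ ^ 2 : ℝ) : 𝕜) = star x ⬝ᵥ (Aᴴ * A) *ᵥ x := by
  rw [← mulVec_mulVec, dotProduct_mulVec, ← star_mulVec]
  simp [dotProduct, RCLike.conj_mul]

lemma Matrix.sum_norm_sq_mulVec_eq_of_conjTranspose_mul_self_eq {𝕜 m n l : Type*} [RCLike 𝕜]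
    [Fintype m] [Fintype n] [Fintype l] {M : Matrix m n 𝕜} {U : Matrix l n 𝕜}
    (h : Mᴴ * M = Uᴴ * U) (x : n → 𝕜) :
    ∑ k, ‖(M *ᵥ x) k‖ ^ 2 = ∑ k, ‖(U *ᵥ x) k‖ ^ 2 := by
  exact_mod_cast (sum_norm_sq_mulVec M x).trans (h ▸ (sum_norm_sq_mulVec U x).symm)

open scoped ComplexOrder MatrixOrder Matrix.Norms.L2Operator in
lemma Matrix.exists_conjTranspose_mul_self_eq {𝕜 m n : Type*} [RCLike 𝕜] [Fintype m]
    [Fintype n] [DecidableEq n] (M : Matrix m n 𝕜) : ∃ U : Matrix n n 𝕜, Mᴴ * M = Uᴴ * U :=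
  CStarAlgebra.nonneg_iff_eq_star_mul_self.mp (posSemidef_conjTranspose_mul_self M).nonneg

namespace MvPolynomial

lemma eval_eq_sum_of_support_subset {σ R : Type*} [CommSemiring R] {S : Finset (σ →₀ ℕ)}
    {q : MvPolynomial σ R} (hq : q.support ⊆ S) (z : σ → R) :
    eval z q = ∑ t : S, coeff t q * eval z (monomial t 1) := by
  conv_lhs => rw [as_sum q]
  rw [map_sum, Finset.sum_subset hq fun t _ ht => by simp [notMem_support_iff.1 ht],
    ← Finset.sum_coe_sort S]
  simp [eval_monomial]

theorem exists_sum_norm_sq_eval_eq_of_support_subset {σ ι : Type*} [Fintype ι]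
    (S : Finset (σ →₀ ℕ)) (B : ι → MvPolynomial σ ℂ) (hB : ∀ k, (B k).support ⊆ S) :
    ∃ C : S → MvPolynomial σ ℂ, (∀ l, (C l).support ⊆ S) ∧
      ∀ z, ∑ l, ‖eval z (C l)‖ ^ 2 = ∑ k, ‖eval z (B k)‖ ^ 2 := by
  classical
  let M : Matrix ι S ℂ := .of fun k t => coeff t (B k)
  obtain ⟨U, hU⟩ := M.exists_conjTranspose_mul_self_eq
  let C : S → MvPolynomial σ ℂ := fun l => ∑ t : S, monomial (t : σ →₀ ℕ) (U l t)
  have hC_supp (l : S) : (C l).support ⊆ S :=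
    (support_sum ..).trans <| Finset.biUnion_subset.2 fun t _ =>
      support_monomial_subset.trans (Finset.singleton_subset_iff.2 t.2)
  refine ⟨C, hC_supp, fun z => ?_⟩
  let E : S → ℂ := fun t => eval z (monomial (t : σ →₀ ℕ) 1)
  have hB_eval (k : ι) : eval z (B k) = (M *ᵥ E) k := eval_eq_sum_of_support_subset (hB k) z
  have hC_eval (l : S) : eval z (C l) = (U *ᵥ E) l := by
    simp [C, E, Matrix.mulVec, dotProduct, eval_monomial]
  simp only [hB_eval, hC_eval]
  exact (Matrix.sum_norm_sq_mulVec_eq_of_conjTranspose_mul_self_eq hU E).symm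

end MvPolynomial

end GramMatrix

theorem stmt17_general (n : ℕ) (p : MvPolynomial (Fin n) ℂ) (d : Fin n → ℕ)
    (hdeg : ∀ i, p.degreeOf i = d i)
    (pt : MvPolynomial (Fin n) ℂ) (hpt : IsReflectionAt d p pt)
    (hAgler : ∃ (N : ℕ) (A : Fin n → Fin N → MvPolynomial (Fin n) ℂ),
      ∀ z : Fin n → ℂ,
        ‖eval z p‖ ^ 2 - ‖eval z pt‖ ^ 2 =
          ∑ j, (1 - ‖z j‖ ^ 2) * ∑ k, ‖eval z (A j k)‖ ^ 2) :
    ∃ A : (j : Fin n) → Fin (d j * ∏ k ∈ Finset.univ.erase j, (d k + 1)) →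
        MvPolynomial (Fin n) ℂ,
      (∀ j l, (A j l).degreeOf j ≤ d j - 1) ∧
      (∀ j l, ∀ i, i ≠ j → (A j l).degreeOf i ≤ d i) ∧
      ∀ z : Fin n → ℂ,
        ‖eval z p‖ ^ 2 - ‖eval z pt‖ ^ 2 =
          ∑ j, (1 - ‖z j‖ ^ 2) * ∑ l, ‖eval z (A j l)‖ ^ 2 := by
  obtain ⟨N, A, hA⟩ := hAgler
  have hp (i : Fin n) : p.degreeOf i ≤ d i := (hdeg i).le
  let e (j : Fin n) : Fin n → ℕ := Function.update (fun i => d i + 1) j (d j)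
  choose C hC_supp hC_sum using fun j => exists_sum_norm_sq_eval_eq_of_support_subset _ (A j)
    (support_subset_exponentBox_of_agler_identity hp (degreeOf_le_of_isReflectionAt hp hpt) hA j)
  have hcard (j : Fin n) : #(exponentBox (e j)) = d j * ∏ k ∈ univ.erase j, (d k + 1) := by
    rw [card_exponentBox, prod_update_of_mem (mem_univ j), sdiff_singleton_eq_erase]
  let reindex (j : Fin n) := (finCongr (hcard j).symm).trans (exponentBox (e j)).equivFin.symm
  have hbox (j l) {α} (hα : α ∈ (C j (reindex j l)).support) (i : Fin n) : α i < e j i :=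
    mem_exponentBox.1 (hC_supp j _ hα) i
  refine ⟨fun j l => C j (reindex j l), fun j l => degreeOf_le_iff.2 fun α hα => ?_,
    fun j l i hij => degreeOf_le_iff.2 fun α hα => ?_, fun z => ?_⟩
  · have := hbox j l hα j
    simp only [e, Function.update_self] at this
    omega
  · have := hbox j l hα i
    simp only [e, Function.update_of_ne hij] at this
    omega
  · rw [hA z]
    refine sum_congr rfl fun j _ => ?_
    rw [← hC_sum j z, ← (reindex j).sum_comp]

/-- if `p` is an Agler denominator of multidegree `(d₁,…,dₙ)`, then there
is a sums-of-squares decomposition in which the `j`-th term is a sum of at most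
`dⱼ ∏_{k≠j} (dₖ + 1)` squared moduli of polynomials of degree at most `dⱼ − 1` in `zⱼ`
and at most `dₖ` in `zₖ` for `k ≠ j`. -/
theorem stmt17 (n : ℕ) (p : MvPolynomial (Fin n) ℂ) (d : Fin n → ℕ)
    (hdeg : ∀ i, p.degreeOf i = d i)
    (hst : IsStable p)
    (pt : MvPolynomial (Fin n) ℂ) (hpt : IsReflectionAt d p pt)
    (hAgler : ∃ (N : ℕ) (A : Fin n → Fin N → MvPolynomial (Fin n) ℂ),
      ∀ z : Fin n → ℂ,
        ‖eval z p‖ ^ 2 - ‖eval z pt‖ ^ 2 =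
          ∑ j, (1 - ‖z j‖ ^ 2) * ∑ k, ‖eval z (A j k)‖ ^ 2) :
    ∃ A : (j : Fin n) → Fin (d j * ∏ k ∈ Finset.univ.erase j, (d k + 1)) →
        MvPolynomial (Fin n) ℂ,
      (∀ j l, (A j l).degreeOf j ≤ d j - 1) ∧
      (∀ j l, ∀ i, i ≠ j → (A j l).degreeOf i ≤ d i) ∧
      ∀ z : Fin n → ℂ,
        ‖eval z p‖ ^ 2 - ‖eval z pt‖ ^ 2 =
          ∑ j, (1 - ‖z j‖ ^ 2) * ∑ l, ‖eval z (A j l)‖ ^ 2 :=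
  stmt17_general n p d hdeg pt hpt hAgler
end
end

section
/- Let p(z_1,z_2,z_3,z_4) = 1 − (1/4)(z_1 + z_2 + z_3 + z_4) and let p̃(z) = z_1 z_2 z_3 z_4 − (1/4)(z_2 z_3 z_4 + z_1 z_3 z_4 + z_1 z_2 z_4 + z_1 z_2 z_3) be its reflection at multidegree (1,1,1,1). Then there exist finitely many polynomials A_{j,k} ∈ ℂ[z_1,z_2,z_3,z_4] such that |p(z)|² − |p̃(z)|² = ∑_{j=1}^4 (1 − |z_j|²)·∑_k |A_{j,k}(z)|² for all z ∈ ℂ⁴. -/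
/-!
Both sides are Hermitian forms in the multi-affine monomials of `z`. By the symmetry of `p` one
looks for a single Hermitian form `Q` in three variables with
`|p(z)|² - |p̃(z)|² = ∑ⱼ (1 - |zⱼ|²) Q(z with zⱼ removed)`. Matching coefficients leaves a Gram
matrix for `Q` that is positive semidefinite; in fact `96 Q` is an explicit sum of fourteen squared
moduli of polynomials with integer coefficients. Dividing those polynomials by `√96` gives the
`A_{j,k}`.
-/

open MvPolynomial Complex Finset

noncomputable section

theorem Fin.prod_univ_erase_eq_prod_succAbove {M : Type*} [CommMonoid M] {n : ℕ}
    (f : Fin (n + 1) → M) (j : Fin (n + 1)) :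
    ∏ i ∈ univ.erase j, f i = ∏ i, f (j.succAbove i) := by
  rw [← compl_singleton, ← Fin.image_succAbove_univ,
    prod_image Fin.succAbove_right_injective.injOn]

/- `96 Q = 2 ∑ᵢ |1 - xᵢ|² + 2 |3 - x - y - z|² + ∑ᵢ<ⱼ |xᵢ + xⱼ - 2xᵢxⱼ|²` plus the images of
these terms under `w ↦ xyz · conj (w (1/x̄, 1/ȳ, 1/z̄))`; the terms of weight 2 are paired with
their images through `2|u|² + 2|v|² = |u + v|² + |u - v|²`. -/
def aglerSquare : Fin 14 → MvPolynomial (Fin 3) ℂ :=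
  let x := X 0; let y := X 1; let z := X 2
  ![(1 - x) * (1 + y * z), (1 - x) * (1 - y * z),
    (1 - y) * (1 + x * z), (1 - y) * (1 - x * z),
    (1 - z) * (1 + x * y), (1 - z) * (1 - x * y),
    3 - (x + y + z) + (3 * x * y * z - (x * y + x * z + y * z)),
    3 - (x + y + z) - (3 * x * y * z - (x * y + x * z + y * z)),
    x + y - 2 * x * y, x + z - 2 * x * z, y + z - 2 * y * z,
    2 * x - x * y - x * z, 2 * y - x * y - y * z, 2 * z - x * z - y * z]

def aglerForm (w : Fin 3 → ℂ) : ℝ := (∑ k, ‖eval w (aglerSquare k)‖ ^ 2) / 96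

theorem sq_norm_sub_sq_norm_reflection_eq_sum_aglerForm (z : Fin 4 → ℂ) :
    ‖1 - (1 / 4 : ℂ) * ∑ i, z i‖ ^ 2 -
        ‖(∏ i, z i) - (1 / 4 : ℂ) * ∑ j, ∏ i ∈ univ.erase j, z i‖ ^ 2 =
      ∑ j, (1 - ‖z j‖ ^ 2) * aglerForm (z ∘ j.succAbove) := by
  simp only [Fin.prod_univ_erase_eq_prod_succAbove, aglerForm, aglerSquare, Fin.sum_univ_succ,
    Fin.sum_univ_zero, Fin.prod_univ_succ, Fin.prod_univ_zero, map_add, map_sub, map_mul,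
    map_one, map_ofNat, eval_X, Matrix.cons_val_zero, Matrix.cons_val_succ, Function.comp_apply]
  simp only [Fin.succAbove, Fin.reduceCastSucc, Fin.reduceLT, Fin.reduceSucc, ↓reduceIte]
  rw [← ofReal_inj]
  push_cast [← mul_conj']
  simp only [map_sub, map_add, map_mul, map_one, map_ofNat, map_div₀, map_zero]
  ring

def aglerPoly (j : Fin 4) (k : Fin 14) : MvPolynomial (Fin 4) ℂ :=
  C ((√96 : ℝ) : ℂ)⁻¹ * rename j.succAbove (aglerSquare k)

theorem sum_sq_norm_eval_aglerPoly (j : Fin 4) (z : Fin 4 → ℂ) :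
    ∑ k, ‖eval z (aglerPoly j k)‖ ^ 2 = aglerForm (z ∘ j.succAbove) := by
  have h96 : ‖((√96 : ℝ) : ℂ)⁻¹‖ ^ 2 = 96⁻¹ := by
    rw [norm_inv, norm_real, Real.norm_of_nonneg (Real.sqrt_nonneg _), inv_pow,
      Real.sq_sqrt (by norm_num)]
  simp only [aglerPoly, aglerForm, eval_mul, eval_C, eval_rename, norm_mul, mul_pow, ← mul_sum,
    h96, div_eq_inv_mul]

/-- for `p(z) = 1 − (1/4)(z₁+z₂+z₃+z₄)` with reflection
`p̃(z) = z₁z₂z₃z₄ − (1/4)(z₂z₃z₄ + z₁z₃z₄ + z₁z₂z₄ + z₁z₂z₃)`, there are finitely many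
polynomials `A_{j,k}` with `|p(z)|² − |p̃(z)|² = ∑ⱼ (1−|zⱼ|²) ∑ₖ |A_{j,k}(z)|²`. -/
theorem stmt18 :
    ∃ (N : ℕ) (A : Fin 4 → Fin N → MvPolynomial (Fin 4) ℂ),
      ∀ z : Fin 4 → ℂ,
        ‖1 - (1 / 4 : ℂ) * ∑ i, z i‖ ^ 2 -
            ‖(∏ i, z i) - (1 / 4 : ℂ) * ∑ j, ∏ i ∈ Finset.univ.erase j, z i‖ ^ 2 =
          ∑ j, (1 - ‖z j‖ ^ 2) * ∑ k, ‖eval z (A j k)‖ ^ 2 :=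
  ⟨14, aglerPoly, fun z => by
    simp only [sq_norm_sub_sq_norm_reflection_eq_sum_aglerForm, sum_sq_norm_eval_aglerPoly]⟩
end
end
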